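/- Let p_r(y) = t(y; m, σ_r, ν_r) be Student-t densities sharing a common location m, with pairwise distinct scale-tail pairs (σ_r, ν_r), σ_r > 0, ν_r > 0. If Σ_{r=1}^R π_r p_r(y) = Σ_{r=1}^R π'_r p'_r(y) for all y ∈ ℝ, where both weight vectors have strictly positive entries summing to one and both families have pairwise distinct parameter pairs, then R = R' and there is a permutation ρ of {1,...,R} with π'_r = π_{ρ(r)}, σ'_r = σ_{ρ(r)}, and ν'_r = ν_{ρ(r)} for all r. -/

import Mathlib

/-- Student-t density with location `m`, scale `σ`, degrees of freedom `ν`. -/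
noncomputable def studentT (m σ ν y : ℝ) : ℝ :=
  Real.Gamma ((ν + 1) / 2) / (Real.Gamma (ν / 2) * σ * Real.sqrt (ν * Real.pi)) *
    (1 + ((y - m) / σ) ^ 2 / ν) ^ (-((ν + 1) / 2))

/-!
After factoring out a normalising constant, `studentT m σ ν y` is a multiple of
`(σ²ν + (y - m)²) ^ (-((ν + 1) / 2))`, and `(σ, ν) ↦ (σ²ν, (ν + 1) / 2)` is injective. So it
suffices that the functions `t ↦ (a + t) ^ (-s)` on `t ≥ 0` are linearly independent for distinct
`(a, s)` with `a, s > 0`. A vanishing combination extends analytically to `t > -A`, where `A` is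
the least `a`; multiplying by `(A + t) ^ s` for the largest `s` paired with `A` and letting
`t → -A` isolates the coefficient of that term. Linear independence then matches the two
mixtures term by term, because all weights are nonzero.
-/

open Function Filter Topology Set

theorem LinearIndependent.exists_equiv_of_sum_smul_eq {R M P ι ι' : Type*} [Ring R]
    [AddCommGroup M] [Module R M] [Fintype ι] [Fintype ι'] {f : P → M}
    (hf : LinearIndependent R f) {θ : ι → P} {θ' : ι' → P} (hθ : Injective θ)
    (hθ' : Injective θ') {a : ι → R} {a' : ι' → R} (ha : ∀ i, a i ≠ 0) (ha' : ∀ i, a' i ≠ 0)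
    (h : ∑ i, a i • f (θ i) = ∑ i, a' i • f (θ' i)) :
    ∃ e : ι' ≃ ι, ∀ i, θ' i = θ (e i) ∧ a' i = a (e i) := by
  set μ := Finsupp.mapDomain θ (Finsupp.equivFunOnFinite.symm a) with hμ_def
  set μ' := Finsupp.mapDomain θ' (Finsupp.equivFunOnFinite.symm a') with hμ'_def
  have hμ : μ = μ' := hf <| by
    rw [hμ_def, hμ'_def, Finsupp.linearCombination_mapDomain, Finsupp.linearCombination_mapDomain,
      Finsupp.linearCombination_apply, Finsupp.linearCombination_apply]
    simpa [Finsupp.sum_fintype] using h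
  have hrange : Set.range θ' = Set.range θ := by
    apply Set.Subset.antisymm <;> rintro _ ⟨i, rfl⟩
    · refine Finsupp.mem_range_of_mapDomain_ne_zero (x := Finsupp.equivFunOnFinite.symm a) ?_
      rw [← hμ_def, hμ, Finsupp.mapDomain_apply hθ']
      exact ha' i
    · refine Finsupp.mem_range_of_mapDomain_ne_zero (x := Finsupp.equivFunOnFinite.symm a') ?_
      rw [← hμ'_def, ← hμ, Finsupp.mapDomain_apply hθ]
      exact ha i
  let e : ι' ≃ ι := (Equiv.ofInjective θ' hθ').trans
    ((Equiv.setCongr hrange).trans (Equiv.ofInjective θ hθ).symm)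
  have he : ∀ i, θ (e i) = θ' i := fun i => Equiv.apply_ofInjective_symm hθ _
  refine ⟨e, fun i => ⟨(he i).symm, ?_⟩⟩
  have := DFunLike.congr_fun hμ (θ' i)
  rwa [hμ'_def, Finsupp.mapDomain_apply hθ', hμ_def, ← he i, Finsupp.mapDomain_apply hθ,
    eq_comm] at this

theorem analyticAt_rpow_const {x : ℝ} (hx : 0 < x) (s : ℝ) :
    AnalyticAt ℝ (fun y : ℝ => y ^ s) x := by
  have : AnalyticAt ℝ (fun y => Real.exp (Real.log y * s)) x := by fun_prop (disch := exact hx)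
  refine this.congr ?_
  filter_upwards [eventually_gt_nhds hx] with y hy
  rw [Real.rpow_def_of_pos hy]

theorem tendsto_rpow_mul_add_rpow_neg_nhdsGT {a b s s' : ℝ} (hs : 0 < s)
    (hab : a < b ∨ a = b ∧ s' < s) :
    Tendsto (fun t => (a + t) ^ s * (b + t) ^ (-s')) (𝓝[>] (-a)) (𝓝 0) := by
  rcases hab with hab | ⟨rfl, hs'⟩
  · have hcont : ContinuousAt (fun t => (a + t) ^ s * (b + t) ^ (-s')) (-a) :=
      ((Real.continuousAt_rpow_const _ _ (Or.inr hs.le)).comp (by fun_prop)).mul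
        ((Real.continuousAt_rpow_const _ _ (Or.inl (by linarith))).comp (by fun_prop))
    simpa [Real.zero_rpow hs.ne'] using hcont.tendsto.mono_left nhdsWithin_le_nhds
  · have hcont : ContinuousAt (fun t => (a + t) ^ (s - s')) (-a) :=
      (Real.continuousAt_rpow_const _ _ (Or.inr (by linarith))).comp (by fun_prop)
    have hlim : Tendsto (fun t => (a + t) ^ (s - s')) (𝓝[>] (-a)) (𝓝 0) := by
      simpa [Real.zero_rpow (sub_pos.2 hs').ne'] using
        hcont.tendsto.mono_left nhdsWithin_le_nhds
    refine hlim.congr' ?_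
    filter_upwards [self_mem_nhdsWithin] with t (ht : -a < t)
    rw [← Real.rpow_add (by linarith), sub_eq_add_neg]

theorem tendsto_rpow_mul_sum_insert_add_rpow_neg {ι : Type*} [DecidableEq ι] {s : Finset ι}
    {i₀ : ι} (hi₀ : i₀ ∉ s) (a e c : ι → ℝ) (he : 0 < e i₀)
    (hdom : ∀ j ∈ s, a i₀ < a j ∨ a i₀ = a j ∧ e j < e i₀) :
    Tendsto (fun t => (a i₀ + t) ^ e i₀ * ∑ j ∈ insert i₀ s, c j * (a j + t) ^ (-e j))
      (𝓝[>] (-a i₀)) (𝓝 (c i₀)) := by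
  have hlead : Tendsto (fun t => (a i₀ + t) ^ e i₀ * (c i₀ * (a i₀ + t) ^ (-e i₀)))
      (𝓝[>] (-a i₀)) (𝓝 (c i₀)) := by
    refine tendsto_const_nhds.congr' ?_
    filter_upwards [self_mem_nhdsWithin] with t (ht : -a i₀ < t)
    have hpos : 0 < (a i₀ + t) ^ e i₀ := Real.rpow_pos_of_pos (by linarith) _
    rw [Real.rpow_neg (by linarith), mul_left_comm, mul_inv_cancel₀ hpos.ne', mul_one]
  have hrest : Tendsto (fun t => ∑ j ∈ s, c j * ((a i₀ + t) ^ e i₀ * (a j + t) ^ (-e j)))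
      (𝓝[>] (-a i₀)) (𝓝 0) := by
    simpa using tendsto_finsetSum s fun j hj =>
      (tendsto_rpow_mul_add_rpow_neg_nhdsGT he (hdom j hj)).const_mul (c j)
  simpa [Finset.sum_insert hi₀, mul_add, Finset.mul_sum, mul_left_comm] using hlead.add hrest

theorem eqOn_zero_of_sum_add_rpow_neg_eq_zero {ι : Type*} (s : Finset ι) (a e c : ι → ℝ) {A : ℝ}
    (hA : 0 < A) (ha : ∀ j ∈ s, A ≤ a j)
    (h : ∀ t, 0 ≤ t → ∑ j ∈ s, c j * (a j + t) ^ (-e j) = 0) :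
    EqOn (fun t => ∑ j ∈ s, c j * (a j + t) ^ (-e j)) 0 (Ioi (-A)) := by
  have han : AnalyticOnNhd ℝ (fun t => ∑ j ∈ s, c j * (a j + t) ^ (-e j)) (Ioi (-A)) :=
    fun x (hx : -A < x) => Finset.analyticAt_fun_sum _ fun j hj => analyticAt_const.mul
      ((analyticAt_rpow_const (by linarith [ha j hj]) _).comp (analyticAt_const.add analyticAt_id))
  refine han.eqOn_zero_of_preconnected_of_eventuallyEq_zero isPreconnected_Ioi
    (show (1 : ℝ) ∈ Ioi (-A) by simp only [mem_Ioi]; linarith) ?_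
  filter_upwards [eventually_gt_nhds one_pos] with t ht using h t ht.le

theorem linearIndependent_add_rpow_neg {ι : Type*} {a e : ι → ℝ}
    (hae : Injective fun i => (a i, e i)) (ha : ∀ i, 0 < a i) (he : ∀ i, 0 < e i) :
    LinearIndependent ℝ (fun i (t : Ici (0 : ℝ)) => (a i + t) ^ (-e i)) := by
  classical
  rw [linearIndependent_iff']
  intro s
  induction s using Finset.induction_on_min_value (fun i => toLex (a i, -e i)) with
  | empty => simp
  | insert i₀ s hi₀ hmin ih =>
    intro c hc
    have hsum : ∀ t, 0 ≤ t → ∑ j ∈ insert i₀ s, c j * (a j + t) ^ (-e j) = 0 := fun t ht => by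
      simpa using congrFun hc ⟨t, ht⟩
    have hdom : ∀ j ∈ s, a i₀ < a j ∨ a i₀ = a j ∧ e j < e i₀ := by
      intro j hj
      have hne : toLex (a i₀, -e i₀) ≠ toLex (a j, -e j) := fun h =>
        hi₀ (hae (by simpa using h) ▸ hj)
      simpa using Prod.Lex.lt_iff.1 (lt_of_le_of_ne (hmin j hj) hne)
    have hzero := eqOn_zero_of_sum_add_rpow_neg_eq_zero _ a e c (ha i₀) (by
      simp only [Finset.mem_insert, forall_eq_or_imp, le_refl, true_and]
      exact fun j hj => (hdom j hj).elim le_of_lt (fun h => h.1.le)) hsum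
    have hc₀ : c i₀ = 0 := by
      refine tendsto_nhds_unique (tendsto_rpow_mul_sum_insert_add_rpow_neg hi₀ a e c (he i₀) hdom)
        (tendsto_const_nhds.congr' ?_)
      filter_upwards [self_mem_nhdsWithin] with t ht
      simp [hzero ht]
    have hs : ∑ j ∈ s, c j • (fun t : Ici (0 : ℝ) => (a j + t) ^ (-e j)) = 0 := by
      rwa [Finset.sum_insert hi₀, hc₀, zero_smul, zero_add] at hc
    intro j hj
    rcases Finset.mem_insert.1 hj with rfl | hj
    exacts [hc₀, ih c hs j hj]

noncomputable def studentTConst (σ ν : ℝ) : ℝ :=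
  Real.Gamma ((ν + 1) / 2) / (Real.Gamma (ν / 2) * σ * Real.sqrt (ν * Real.pi)) *
    (σ ^ 2 * ν) ^ ((ν + 1) / 2)

theorem studentTConst_pos {σ ν : ℝ} (hσ : 0 < σ) (hν : 0 < ν) : 0 < studentTConst σ ν := by
  unfold studentTConst
  have := Real.Gamma_pos_of_pos (show 0 < (ν + 1) / 2 by positivity)
  have := Real.Gamma_pos_of_pos (show 0 < ν / 2 by positivity)
  positivity

theorem studentT_eq_mul_rpow (m : ℝ) {σ ν : ℝ} (hσ : 0 < σ) (hν : 0 < ν) (y : ℝ) :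
    studentT m σ ν y = studentTConst σ ν * (σ ^ 2 * ν + (y - m) ^ 2) ^ (-((ν + 1) / 2)) := by
  have hb : 0 < σ ^ 2 * ν := by positivity
  have hx : 0 < σ ^ 2 * ν + (y - m) ^ 2 := by positivity
  have h1 : 1 + ((y - m) / σ) ^ 2 / ν = (σ ^ 2 * ν + (y - m) ^ 2) / (σ ^ 2 * ν) := by
    field_simp
  rw [studentT, studentTConst, h1, Real.div_rpow hx.le hb.le, Real.rpow_neg hb.le]
  field_simp

abbrev StudentTParams : Type := {p : ℝ × ℝ // 0 < p.1 ∧ 0 < p.2}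

theorem linearIndependent_studentT (m : ℝ) :
    LinearIndependent ℝ (fun q : StudentTParams => studentT m q.1.1 q.1.2) := by
  have hinj : Injective fun q : StudentTParams => (q.1.1 ^ 2 * q.1.2, (q.1.2 + 1) / 2) := by
    rintro ⟨⟨σ₁, ν₁⟩, hσ₁, hν₁⟩ ⟨⟨σ₂, ν₂⟩, hσ₂, hν₂⟩ h
    simp only [Prod.mk.injEq] at h
    obtain rfl : ν₁ = ν₂ := by linarith [h.2]
    have hsq : σ₁ ^ 2 = σ₂ ^ 2 := mul_right_cancel₀ hν₁.ne' h.1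
    obtain rfl : σ₁ = σ₂ := (pow_left_inj₀ hσ₁.le hσ₂.le two_ne_zero).1 hsq
    rfl
  have ha (q : StudentTParams) : 0 < q.1.1 ^ 2 * q.1.2 := mul_pos (pow_pos q.2.1 2) q.2.2
  have he (q : StudentTParams) : 0 < (q.1.2 + 1) / 2 := by linarith [q.2.2]
  have hrpow := (linearIndependent_add_rpow_neg hinj ha he).units_smul fun q =>
    Units.mk0 (studentTConst q.1.1 q.1.2) (studentTConst_pos q.2.1 q.2.2).ne'
  refine LinearIndependent.of_comp (LinearMap.funLeft ℝ ℝ fun t : Ici (0 : ℝ) => m + √t) ?_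
  convert hrpow using 1
  ext q t
  simp [studentT_eq_mul_rpow m q.2.1 q.2.2, Real.sq_sqrt t.2]

theorem studentT_mixture_identifiable_general (R R' : ℕ) (m : ℝ)
    (w : Fin R → ℝ) (σ ν : Fin R → ℝ)
    (w' : Fin R' → ℝ) (σ' ν' : Fin R' → ℝ)
    (hw : ∀ r, 0 < w r)
    (hw' : ∀ r, 0 < w' r)
    (hσ : ∀ r, 0 < σ r) (hν : ∀ r, 0 < ν r)
    (hσ' : ∀ r, 0 < σ' r) (hν' : ∀ r, 0 < ν' r)
    (hdist : Function.Injective (fun r => (σ r, ν r)))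
    (hdist' : Function.Injective (fun r => (σ' r, ν' r)))
    (heq : ∀ y : ℝ, ∑ r, w r * studentT m (σ r) (ν r) y =
      ∑ r, w' r * studentT m (σ' r) (ν' r) y) :
    R = R' ∧ ∃ e : Fin R' ≃ Fin R,
      ∀ r, w' r = w (e r) ∧ σ' r = σ (e r) ∧ ν' r = ν (e r) := by
  let θ : Fin R → StudentTParams := fun r => ⟨(σ r, ν r), hσ r, hν r⟩
  let θ' : Fin R' → StudentTParams := fun r => ⟨(σ' r, ν' r), hσ' r, hν' r⟩
  have hθ : Injective θ := fun r s h => hdist (congrArg Subtype.val h)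
  have hθ' : Injective θ' := fun r s h => hdist' (congrArg Subtype.val h)
  obtain ⟨e, he⟩ := (linearIndependent_studentT m).exists_equiv_of_sum_smul_eq hθ hθ'
    (fun r => (hw r).ne') (fun r => (hw' r).ne') (funext fun y => by simpa [θ, θ'] using heq y)
  refine ⟨by simpa using (Fintype.card_congr e).symm, e, fun r => ?_⟩
  obtain ⟨hθr, hwr⟩ := he r
  simp only [θ, θ', Subtype.mk.injEq, Prod.mk.injEq] at hθr
  exact ⟨hwr, hθr⟩

theorem studentT_mixture_identifiable (R R' : ℕ) (m : ℝ)
    (w : Fin R → ℝ) (σ ν : Fin R → ℝ)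
    (w' : Fin R' → ℝ) (σ' ν' : Fin R' → ℝ)
    (hw : ∀ r, 0 < w r) (hwsum : ∑ r, w r = 1)
    (hw' : ∀ r, 0 < w' r) (hwsum' : ∑ r, w' r = 1)
    (hσ : ∀ r, 0 < σ r) (hν : ∀ r, 0 < ν r)
    (hσ' : ∀ r, 0 < σ' r) (hν' : ∀ r, 0 < ν' r)
    (hdist : Function.Injective (fun r => (σ r, ν r)))
    (hdist' : Function.Injective (fun r => (σ' r, ν' r)))
    (heq : ∀ y : ℝ, ∑ r, w r * studentT m (σ r) (ν r) y =
      ∑ r, w' r * studentT m (σ' r) (ν' r) y) :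
    R = R' ∧ ∃ e : Fin R' ≃ Fin R,
      ∀ r, w' r = w (e r) ∧ σ' r = σ (e r) ∧ ν' r = ν (e r) :=
  studentT_mixture_identifiable_general R R' m w σ ν w' σ' ν' hw hw' hσ hν hσ' hν' hdist hdist' heq
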